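/- Let m ≥ 5 and let r ≥ 0 be an integer such that every point of ℤ^{2^{m−1}} is at Manhattan distance at most r from some point of Λ(m−1, m−1). Then every point of ℤ^{2ᵐ} is at Manhattan distance at most 3r + 2^{m−1} from some point of Λ(m, m). (In terms of covering radii: r(m, m) ≤ 3·r(m−1, m−1) + 2^{m−1}.) -/

import Mathlib

/-- `Hmat m` : the `2^m × 2^m` matrix defined by `H₀ = [1]` and
`H_{m+1} = [[Hₘ, Hₘ], [0, Hₘ]]` in block form. -/
def Hmat : (m : ℕ) → Matrix (Fin (2 ^ m)) (Fin (2 ^ m)) ℤ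
  | 0 => Matrix.of fun _ _ => 1
  | m + 1 =>
      Matrix.reindex
        (finSumFinEquiv.trans (finCongr (by rw [pow_succ, mul_two] :
          2 ^ m + 2 ^ m = 2 ^ (m + 1))))
        (finSumFinEquiv.trans (finCongr (by rw [pow_succ, mul_two] :
          2 ^ m + 2 ^ m = 2 ^ (m + 1))))
        (Matrix.fromBlocks (Hmat m) (Hmat m) 0 (Hmat m))

/-- `Smat m` : the `2^m × 2^m` Sylvester Hadamard matrix, `𝓗₀ = [1]`,
`𝓗_{m+1} = [[𝓗ₘ, 𝓗ₘ], [𝓗ₘ, −𝓗ₘ]]`. -/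
def Smat : (m : ℕ) → Matrix (Fin (2 ^ m)) (Fin (2 ^ m)) ℤ
  | 0 => Matrix.of fun _ _ => 1
  | m + 1 =>
      Matrix.reindex
        (finSumFinEquiv.trans (finCongr (by rw [pow_succ, mul_two] :
          2 ^ m + 2 ^ m = 2 ^ (m + 1))))
        (finSumFinEquiv.trans (finCongr (by rw [pow_succ, mul_two] :
          2 ^ m + 2 ^ m = 2 ^ (m + 1))))
        (Matrix.fromBlocks (Smat m) (Smat m) (Smat m) (-(Smat m)))

/-- Hamming weight of the `s`-th row of `Hmat m`. -/
def rowWeight (m : ℕ) (s : Fin (2 ^ m)) : ℕ :=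
  (Finset.univ.filter (fun t => Hmat m s t ≠ 0)).card

/-- `Gmat m j` : the matrix whose `s`-th row is the `s`-th row of `Hmat m`
multiplied by `2^(j − ℓ)` (truncated subtraction) where `2^ℓ` is the Hamming
weight of that row. -/
def Gmat (m j : ℕ) : Matrix (Fin (2 ^ m)) (Fin (2 ^ m)) ℤ :=
  Matrix.of fun s t => (2 : ℤ) ^ (j - Nat.log 2 (rowWeight m s)) * Hmat m s t

/-- The lattice generated by the rows of `G`. -/
def latticeOf {n : ℕ} (G : Matrix (Fin n) (Fin n) ℤ) : Set (Fin n → ℤ) :=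
  { x | ∃ u : Fin n → ℤ, x = Matrix.vecMul u G }

/-! In block form `G(m+1, m+1) = [[G, G], [0, 2G]]` with `G = G(m, m)`: a top row doubles its
weight and keeps its scaling, a bottom row keeps its weight and gains a factor `2`. Hence
`Λ(m+1, m+1)` contains every `(a, a + 2b)` with `a, b ∈ Λ(m, m)`. To cover `(x, y)`, take `a`
within `r` of `x` and then `b` within `r` of `⌊(y - a)/2⌋`; the rounding costs at most `1` in
each of the `2^m` coordinates of the second half, for a total of `r + 2r + 2^m`. -/

theorem Int.abs_sub_two_mul_le (y b : ℤ) : |y - 2 * b| ≤ 2 * |y / 2 - b| + 1 := by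
  rcases abs_cases (y - 2 * b) with h₁ | h₁ <;>
    rcases abs_cases (y / 2 - b) with h₂ | h₂ <;> omega

def CoveringRadiusLE {ι : Type*} [Fintype ι] (L : Set (ι → ℤ)) (r : ℤ) : Prop :=
  ∀ x : ι → ℤ, ∃ c ∈ L, ∑ i, |x i - c i| ≤ r

namespace CoveringRadiusLE

variable {ι κ : Type*} [Fintype ι] [Fintype κ] {L : Set (ι → ℤ)} {r : ℤ}

theorem mono {L' : Set (ι → ℤ)} (h : CoveringRadiusLE L r) (hL : L ⊆ L') :
    CoveringRadiusLE L' r := fun x =>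
  let ⟨c, hc, hxc⟩ := h x
  ⟨c, hL hc, hxc⟩

theorem image_comp_equiv (h : CoveringRadiusLE L r) (e : ι ≃ κ) :
    CoveringRadiusLE ((· ∘ e.symm) '' L) r := by
  intro x
  obtain ⟨c, hc, hxc⟩ := h (x ∘ e)
  refine ⟨c ∘ e.symm, Set.mem_image_of_mem _ hc, ?_⟩
  rw [← e.sum_comp]
  simpa using hxc

theorem image2_sumElim_add_two_smul (h : CoveringRadiusLE L r) :
    CoveringRadiusLE (Set.image2 (fun a b => Sum.elim a (a + 2 • b)) L L)
      (3 * r + Fintype.card ι) := by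
  intro x
  obtain ⟨a, ha, hxa⟩ := h (x ∘ Sum.inl)
  obtain ⟨b, hb, hyb⟩ := h fun i => (x (.inr i) - a i) / 2
  refine ⟨_, Set.mem_image2_of_mem ha hb, ?_⟩
  calc ∑ i, |x i - Sum.elim a (a + 2 • b) i|
      = ∑ i, |x (.inl i) - a i| + ∑ i, |(x (.inr i) - a i) - 2 * b i| := by
        simp [Fintype.sum_sum_type, sub_sub]
    _ ≤ r + ∑ i, (2 * |(x (.inr i) - a i) / 2 - b i| + 1) :=
        add_le_add hxa (Finset.sum_le_sum fun i _ => Int.abs_sub_two_mul_le _ _)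
    _ = r + 2 * ∑ i, |(x (.inr i) - a i) / 2 - b i| + Fintype.card ι := by
        rw [Finset.sum_add_distrib, ← Finset.mul_sum]
        simp [add_assoc]
    _ ≤ 3 * r + Fintype.card ι := by linarith

end CoveringRadiusLE

def sumFinTwoPowEquiv (m : ℕ) : Fin (2 ^ m) ⊕ Fin (2 ^ m) ≃ Fin (2 ^ (m + 1)) :=
  finSumFinEquiv.trans (finCongr (by rw [pow_succ, mul_two]))

theorem Hmat_succ (m : ℕ) :
    Hmat (m + 1) = Matrix.reindex (sumFinTwoPowEquiv m) (sumFinTwoPowEquiv m)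
      (Matrix.fromBlocks (Hmat m) (Hmat m) 0 (Hmat m)) := rfl

theorem Hmat_succ_apply (m : ℕ) (a b : Fin (2 ^ m) ⊕ Fin (2 ^ m)) :
    Hmat (m + 1) (sumFinTwoPowEquiv m a) (sumFinTwoPowEquiv m b) =
      Matrix.fromBlocks (Hmat m) (Hmat m) 0 (Hmat m) a b := by
  simp [Hmat_succ]

theorem Hmat_diag (m : ℕ) (s : Fin (2 ^ m)) : Hmat m s s = 1 := by
  induction m with
  | zero => simp [Hmat]
  | succ m ih =>
    obtain ⟨a, rfl⟩ := (sumFinTwoPowEquiv m).surjective s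
    cases a <;> simp [Hmat_succ_apply, ih]

theorem rowWeight_pos (m : ℕ) (s : Fin (2 ^ m)) : 0 < rowWeight m s :=
  Finset.card_pos.2 ⟨s, by simp [Hmat_diag]⟩

theorem log_rowWeight_le (m : ℕ) (s : Fin (2 ^ m)) : Nat.log 2 (rowWeight m s) ≤ m :=
  calc Nat.log 2 (rowWeight m s) ≤ Nat.log 2 (2 ^ m) :=
        Nat.log_mono_right ((Finset.card_filter_le _ _).trans_eq (Finset.card_fin _))
    _ = m := Nat.log_pow one_lt_two m

theorem rowWeight_succ_inl (m : ℕ) (s : Fin (2 ^ m)) :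
    rowWeight (m + 1) (sumFinTwoPowEquiv m (.inl s)) = 2 * rowWeight m s := by
  rw [rowWeight, rowWeight, Finset.card_filter, Finset.card_filter,
    ← (sumFinTwoPowEquiv m).sum_comp, Fintype.sum_sum_type]
  simp [Hmat_succ_apply, two_mul]

theorem rowWeight_succ_inr (m : ℕ) (s : Fin (2 ^ m)) :
    rowWeight (m + 1) (sumFinTwoPowEquiv m (.inr s)) = rowWeight m s := by
  rw [rowWeight, rowWeight, Finset.card_filter, Finset.card_filter,
    ← (sumFinTwoPowEquiv m).sum_comp, Fintype.sum_sum_type]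
  simp [Hmat_succ_apply]

theorem Gmat_succ_self (m : ℕ) :
    Gmat (m + 1) (m + 1) = Matrix.reindex (sumFinTwoPowEquiv m) (sumFinTwoPowEquiv m)
      (Matrix.fromBlocks (Gmat m m) (Gmat m m) 0 (2 • Gmat m m)) := by
  ext i j
  obtain ⟨a, rfl⟩ := (sumFinTwoPowEquiv m).surjective i
  obtain ⟨b, rfl⟩ := (sumFinTwoPowEquiv m).surjective j
  rcases a with s | s
  · have hw : Nat.log 2 (rowWeight (m + 1) (sumFinTwoPowEquiv m (.inl s))) =
        Nat.log 2 (rowWeight m s) + 1 := by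
      rw [rowWeight_succ_inl, mul_comm]
      exact Nat.log_mul_base one_lt_two (rowWeight_pos m s).ne'
    cases b <;> simp [Gmat, Hmat_succ_apply, hw]
  · have hexp : m + 1 - Nat.log 2 (rowWeight m s) = m - Nat.log 2 (rowWeight m s) + 1 := by
      have := log_rowWeight_le m s; omega
    cases b <;> simp [Gmat, Hmat_succ_apply, rowWeight_succ_inr, hexp, pow_succ, mul_comm,
      mul_left_comm]

theorem image_image2_subset_latticeOf_Gmat_succ_self (m : ℕ) :
    (· ∘ (sumFinTwoPowEquiv m).symm) '' Set.image2 (fun a b => Sum.elim a (a + 2 • b))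
      (latticeOf (Gmat m m)) (latticeOf (Gmat m m)) ⊆ latticeOf (Gmat (m + 1) (m + 1)) := by
  rintro _ ⟨_, ⟨_, ⟨u, rfl⟩, _, ⟨v, rfl⟩, rfl⟩, rfl⟩
  refine ⟨Sum.elim u v ∘ (sumFinTwoPowEquiv m).symm, ?_⟩
  rw [Gmat_succ_self, Matrix.reindex_apply, Matrix.submatrix_vecMul_equiv,
    Matrix.vecMul_fromBlocks, Matrix.vecMul_smul]
  simp [Function.comp_assoc]

/-- Covering-radius recursion for `Λ(m, m)`: if every point of `ℤ^{2^{m−1}}` is at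
Manhattan distance at most `r` from `Λ(m−1, m−1)`, then every point of `ℤ^{2^m}`
is at Manhattan distance at most `3r + 2^{m−1}` from `Λ(m, m)`. -/
theorem covering_radius_Gmm_recursion (m : ℕ) (hm : 5 ≤ m) (r : ℕ)
    (hr : ∀ x : Fin (2 ^ (m - 1)) → ℤ,
      ∃ c ∈ latticeOf (Gmat (m - 1) (m - 1)), (∑ i, |x i - c i|) ≤ (r : ℤ)) :
    ∀ x : Fin (2 ^ m) → ℤ,
      ∃ c ∈ latticeOf (Gmat m m), (∑ i, |x i - c i|) ≤ 3 * (r : ℤ) + 2 ^ (m - 1) := by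
  obtain ⟨n, rfl⟩ : ∃ n, m = n + 1 := ⟨m - 1, by omega⟩
  simp only [Nat.add_sub_cancel] at hr ⊢
  have hcover_n : CoveringRadiusLE (latticeOf (Gmat n n)) r := hr
  have hcover_succ : CoveringRadiusLE (latticeOf (Gmat (n + 1) (n + 1))) (3 * r + 2 ^ n) := by
    simpa using (hcover_n.image2_sumElim_add_two_smul.image_comp_equiv (sumFinTwoPowEquiv n)).mono
      (image_image2_subset_latticeOf_Gmat_succ_self n)
  exact hcover_succ
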